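/- Let T_l be the complete binary tree of level l ≥ 3 (a rooted binary tree in which the root has degree 2, every internal non-root vertex has degree 3, and all 2^l leaves are at distance l from the root, so T_l has 2^{l+1} − 1 vertices). Then the harmonic index of its total graph satisfies H(T(T_l)) = (223/120)·2^l − 758/495. -/

import Mathlib

open scoped Classical

/-- The total graph `T(G)` of a simple graph `G`: its vertex set is `V(G) ∪ E(G)`,
and two vertices of `T(G)` are adjacent iff the corresponding elements of `G`
are adjacent vertices, adjacent (distinct, sharing an endpoint) edges, or an
incident vertex–edge pair. -/
def SimpleGraph.totalGraph {V : Type*} (G : SimpleGraph V) :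
    SimpleGraph (V ⊕ G.edgeSet) where
  Adj x y :=
    match x, y with
    | Sum.inl u, Sum.inl v => G.Adj u v
    | Sum.inl u, Sum.inr e => u ∈ (e : Sym2 V)
    | Sum.inr e, Sum.inl u => u ∈ (e : Sym2 V)
    | Sum.inr e, Sum.inr f => e ≠ f ∧ ∃ v, v ∈ (e : Sym2 V) ∧ v ∈ (f : Sym2 V)
  symm := ⟨by
    rintro (u | e) (v | f) h
    · exact h.symm
    · exact h
    · exact h
    · exact ⟨h.1.symm, h.2.imp fun v hv => ⟨hv.2, hv.1⟩⟩⟩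
  loopless := ⟨by
    rintro (u | e) h
    · exact G.irrefl h
    · exact h.1 rfl⟩

/-- The harmonic index `H(G) = ∑_{uv ∈ E(G)} 2 / (deg u + deg v)`. -/
noncomputable def SimpleGraph.harmonicIndex {V : Type*} [Fintype V] (G : SimpleGraph V) : ℝ :=
  ∑ e ∈ G.edgeFinset,
    Sym2.lift ⟨fun u v => 2 / ((G.degree u : ℝ) + (G.degree v : ℝ)),
      fun u v => by simp [add_comm]⟩ e

/-- The complete binary tree of level `l`: vertices are heap-indexed `1, …, 2^(l+1) - 1`
(here realized as `Fin (2^(l+1) - 1)` via `i ↦ i + 1`), and vertex `i` is adjacent to its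
children `2i` and `2i + 1`.  The root (index `1`) has degree 2, every internal non-root
vertex has degree 3, and the `2^l` leaves are at distance `l` from the root. -/
def completeBinaryTree (l : ℕ) : SimpleGraph (Fin (2 ^ (l + 1) - 1)) where
  Adj x y := (x.val + 1) = (y.val + 1) / 2 ∨ (y.val + 1) = (x.val + 1) / 2
  symm := ⟨fun x y h => h.symm⟩
  loopless := ⟨fun x h => by rcases h with h | h <;> omega⟩

/-!
In `T(G)` a vertex `v` has degree `2 deg v` and an edge `uv` has degree `deg u + deg v`, so the
weight of every edge of `T(T_l)` is determined by tree degrees. Numbering the vertices of `T_l` in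
heap order (the children of `m` are `2m` and `2m + 1`, and tree edge `m` joins `m` to `m / 2`), the
edges of `T(T_l)` fall into five families indexed by heap positions: the tree edges, the two
incidences of each tree edge with its endpoints, the pairs formed by a tree edge and its parent
edge, and the pairs of sibling edges. Along each family the weight is constant near the root, in
the middle and at the leaves, so each family contributes an explicit affine function of `2 ^ l`.
-/

open Finset

namespace SimpleGraph

variable {V : Type*} [Fintype V] (G : SimpleGraph V)

noncomputable def harmonicWeight (e : Sym2 V) : ℝ :=
  Sym2.lift ⟨fun u v => 2 / ((G.degree u : ℝ) + (G.degree v : ℝ)),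
    fun u v => by simp [add_comm]⟩ e

@[simp]
theorem harmonicWeight_mk (u v : V) :
    G.harmonicWeight s(u, v) = 2 / ((G.degree u : ℝ) + (G.degree v : ℝ)) := rfl

theorem harmonicIndex_eq_sum_harmonicWeight :
    G.harmonicIndex = ∑ e ∈ G.edgeFinset, G.harmonicWeight e := rfl

theorem totalGraph_degree_eq (x : V ⊕ G.edgeSet) :
    G.totalGraph.degree x = {v | G.totalGraph.Adj x (.inl v)}.ncard
      + (Subtype.val '' {e : G.edgeSet | G.totalGraph.Adj x (.inr e)}).ncard := by
  rw [← card_neighborSet_eq_degree, ← Nat.card_eq_fintype_card,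
    Set.ncard_image_of_injective _ Subtype.val_injective, ← Nat.card_coe_set_eq,
    ← Nat.card_coe_set_eq, ← Nat.card_sum]
  exact Nat.card_congr Equiv.subtypeSum

theorem ncard_incidenceSet (v : V) : (G.incidenceSet v).ncard = G.degree v := by
  rw [← card_incidenceSet_eq_degree, ← Nat.card_eq_fintype_card, Nat.card_coe_set_eq]

theorem totalGraph_degree_inl (v : V) : G.totalGraph.degree (.inl v) = 2 * G.degree v := by
  have hinc : Subtype.val '' {e : G.edgeSet | G.totalGraph.Adj (.inl v) (.inr e)}
      = G.incidenceSet v := by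
    ext e
    simp [incidenceSet, totalGraph, and_comm]
  rw [totalGraph_degree_eq, hinc, ncard_incidenceSet, two_mul, ← card_neighborSet_eq_degree,
    ← Nat.card_eq_fintype_card]
  rfl

theorem totalGraph_degree_inr {u v : V} (h : G.Adj u v) :
    G.totalGraph.degree (.inr ⟨s(u, v), h⟩) = G.degree u + G.degree v := by
  have hends : {w | G.totalGraph.Adj (.inr ⟨s(u, v), h⟩) (.inl w)} = {u, v} := by
    ext w
    simp [totalGraph]
  have hnbrs : Subtype.val '' {f : G.edgeSet | G.totalGraph.Adj (.inr ⟨s(u, v), h⟩) (.inr f)}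
      = (G.incidenceSet u ∪ G.incidenceSet v) \ {s(u, v)} := by
    ext f
    simp only [totalGraph, Set.mem_image, Set.mem_ofPred_eq, Subtype.exists, exists_and_right,
      exists_eq_right, Sym2.mem_iff, exists_eq_or_imp, exists_eq_left, incidenceSet,
      Set.mem_sdiff, Set.mem_union, Set.mem_singleton_iff, ne_eq]
    grind
  have hunion := Set.ncard_union_add_ncard_inter (G.incidenceSet u) (G.incidenceSet v)
  rw [G.incidenceSet_inter_incidenceSet_of_adj h, Set.ncard_singleton, ncard_incidenceSet,
    ncard_incidenceSet] at hunion
  have herase := Set.ncard_sdiff_singleton_add_one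
    (Set.mem_union_left (G.incidenceSet v) (G.mk'_mem_incidenceSet_left_iff.2 h))
  rw [totalGraph_degree_eq, hends, hnbrs, Set.ncard_pair h.ne]
  omega

end SimpleGraph

theorem Finset.sum_Ico_eq_of_three_pieces {f : ℕ → ℝ} {a b c d : ℕ} (hab : a ≤ b)
    (hbc : b ≤ c) (hcd : c ≤ d) {x y z : ℝ} (hx : ∀ m, a ≤ m → m < b → f m = x)
    (hy : ∀ m, b ≤ m → m < c → f m = y) (hz : ∀ m, c ≤ m → m < d → f m = z) :
    ∑ m ∈ Ico a d, f m = ((b : ℝ) - a) * x + ((c : ℝ) - b) * y + ((d : ℝ) - c) * z := by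
  have piece : ∀ {p q : ℕ} {w : ℝ}, p ≤ q → (∀ m, p ≤ m → m < q → f m = w) →
      ∑ m ∈ Ico p q, f m = ((q : ℝ) - p) * w := fun hpq hw => by
    rw [sum_congr rfl fun m hm => hw m (mem_Ico.1 hm).1 (mem_Ico.1 hm).2, sum_const,
      Nat.card_Ico, nsmul_eq_mul, Nat.cast_sub hpq]
  rw [← sum_Ico_consecutive f (hab.trans hbc) hcd, ← sum_Ico_consecutive f hab hbc,
    piece hab hx, piece hbc hy, piece hcd hz]

namespace completeBinaryTree

variable {l m k : ℕ}

/-- The vertex at heap position `m`; positions outside `1 ≤ m < 2 ^ (l + 1)` wrap around. -/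
def vertex (l m : ℕ) : Fin (2 ^ (l + 1) - 1) :=
  ⟨(m - 1) % (2 ^ (l + 1) - 1),
    Nat.mod_lt _ (by have := Nat.one_lt_two_pow (Nat.succ_ne_zero l); omega)⟩

theorem vertex_val (h₁ : 1 ≤ m) (h₂ : m < 2 ^ (l + 1)) : (vertex l m).val = m - 1 :=
  Nat.mod_eq_of_lt (by omega)

@[simp]
theorem vertex_val_add_one (i : Fin (2 ^ (l + 1) - 1)) : vertex l (i.val + 1) = i :=
  Fin.ext (by rw [vertex_val (by omega) (by omega), Nat.add_sub_cancel])

theorem vertex_inj (hm₁ : 1 ≤ m) (hm₂ : m < 2 ^ (l + 1)) (hk₁ : 1 ≤ k)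
    (hk₂ : k < 2 ^ (l + 1)) :
    vertex l m = vertex l k ↔ m = k := by
  rw [Fin.ext_iff, vertex_val hm₁ hm₂, vertex_val hk₁ hk₂]
  omega

theorem adj_vertex_iff (hm₁ : 1 ≤ m) (hm₂ : m < 2 ^ (l + 1)) (hk₁ : 1 ≤ k)
    (hk₂ : k < 2 ^ (l + 1)) :
    (completeBinaryTree l).Adj (vertex l m) (vertex l k) ↔ m = k / 2 ∨ k = m / 2 := by
  change _ + 1 = (_ + 1) / 2 ∨ _ + 1 = (_ + 1) / 2 ↔ _
  rw [vertex_val hm₁ hm₂, vertex_val hk₁ hk₂]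
  omega

theorem adj_vertex_div_two (h₁ : 2 ≤ m) (h₂ : m < 2 ^ (l + 1)) :
    (completeBinaryTree l).Adj (vertex l m) (vertex l (m / 2)) :=
  (adj_vertex_iff (by omega) h₂ (by omega) (by omega)).2 (Or.inr rfl)

theorem degree_vertex_eq_card (h₁ : 1 ≤ m) (h₂ : m < 2 ^ (l + 1)) :
    (completeBinaryTree l).degree (vertex l m)
      = #{k ∈ Ico 1 (2 ^ (l + 1)) | m = k / 2 ∨ k = m / 2} := by
  rw [← SimpleGraph.card_neighborFinset_eq_degree, SimpleGraph.neighborFinset_eq_filter]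
  refine card_bij (fun i _ => i.val + 1) ?_ (fun i _ j _ h => Fin.ext (by omega)) ?_
  · intro i hi
    rw [mem_filter, ← vertex_val_add_one i, adj_vertex_iff h₁ h₂ (by omega) (by omega)] at hi
    simp only [mem_filter, mem_Ico]
    omega
  · intro k hk
    simp only [mem_filter, mem_Ico] at hk
    refine ⟨vertex l k, ?_, by rw [vertex_val hk.1.1 hk.1.2]; omega⟩
    rw [mem_filter, adj_vertex_iff h₁ h₂ hk.1.1 hk.1.2]
    exact ⟨mem_univ _, hk.2⟩

theorem degree_vertex (hl : 1 ≤ l) (h₁ : 1 ≤ m) (h₂ : m < 2 ^ (l + 1)) :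
    (completeBinaryTree l).degree (vertex l m)
      = if m = 1 then 2 else if m < 2 ^ l then 3 else 1 := by
  have : 2 ≤ 2 ^ l := by simpa using Nat.pow_le_pow_right two_pos hl
  rw [degree_vertex_eq_card h₁ h₂]
  split_ifs with h h'
  · rw [show {k ∈ Ico 1 (2 ^ (l + 1)) | m = k / 2 ∨ k = m / 2} = {2, 3} by
      ext; simp only [mem_filter, mem_Ico, mem_insert, mem_singleton]; omega]
    rfl
  · rw [show {k ∈ Ico 1 (2 ^ (l + 1)) | m = k / 2 ∨ k = m / 2} = {m / 2, 2 * m, 2 * m + 1} by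
      ext; simp only [mem_filter, mem_Ico, mem_insert, mem_singleton]; omega]
    rw [card_insert_of_notMem (by simp only [mem_insert, mem_singleton]; omega),
      card_pair (by omega)]
  · rw [show {k ∈ Ico 1 (2 ^ (l + 1)) | m = k / 2 ∨ k = m / 2} = {m / 2} by
      ext; simp only [mem_filter, mem_Ico, mem_singleton]; omega]
    rfl

/-- Outside `2 ≤ m < 2 ^ (l + 1)` this is a junk edge, whose existence needs `l ≥ 1`. -/
def edge (hl : 1 ≤ l) (m : ℕ) : (completeBinaryTree l).edgeSet :=
  if h : 2 ≤ m ∧ m < 2 ^ (l + 1) then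
    ⟨s(vertex l m, vertex l (m / 2)), adj_vertex_div_two h.1 h.2⟩
  else ⟨s(vertex l 2, vertex l 1), adj_vertex_div_two le_rfl (by
    have := Nat.pow_le_pow_right two_pos (Nat.succ_le_succ hl); omega)⟩

variable (hl : 1 ≤ l)

theorem edge_eq (h₁ : 2 ≤ m) (h₂ : m < 2 ^ (l + 1)) :
    edge hl m = ⟨s(vertex l m, vertex l (m / 2)), adj_vertex_div_two h₁ h₂⟩ :=
  dif_pos ⟨h₁, h₂⟩

theorem val_edge (h₁ : 2 ≤ m) (h₂ : m < 2 ^ (l + 1)) :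
    (edge hl m).val = s(vertex l m, vertex l (m / 2)) := by
  rw [edge_eq hl h₁ h₂]

theorem mem_edge (h₁ : 2 ≤ m) (h₂ : m < 2 ^ (l + 1)) {v : Fin (2 ^ (l + 1) - 1)} :
    v ∈ (edge hl m).val ↔ v = vertex l m ∨ v = vertex l (m / 2) := by
  rw [val_edge hl h₁ h₂, Sym2.mem_iff]

theorem edge_inj (hm₁ : 2 ≤ m) (hm₂ : m < 2 ^ (l + 1)) (hk₁ : 2 ≤ k)
    (hk₂ : k < 2 ^ (l + 1)) :
    edge hl m = edge hl k ↔ m = k := by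
  refine ⟨fun h => ?_, congrArg _⟩
  rw [Subtype.ext_iff, val_edge hl hm₁ hm₂, val_edge hl hk₁ hk₂, Sym2.eq_iff,
    vertex_inj (by omega) hm₂ (by omega) hk₂, vertex_inj (by omega) (by omega) (by omega) hk₂,
    vertex_inj (by omega) hm₂ (by omega) (by omega),
    vertex_inj (by omega) (by omega) (by omega) (by omega)] at h
  omega

theorem exists_edge_eq (e : (completeBinaryTree l).edgeSet) :
    ∃ m, 2 ≤ m ∧ m < 2 ^ (l + 1) ∧ edge hl m = e := by
  obtain ⟨e, he⟩ := e
  induction e using Sym2.ind with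
  | _ x y =>
    have hx := vertex_val_add_one x
    have hy := vertex_val_add_one y
    have hxy : x.val + 1 = (y.val + 1) / 2 ∨ y.val + 1 = (x.val + 1) / 2 := he
    rcases hxy with h | h
    · refine ⟨y.val + 1, by omega, by omega, ?_⟩
      rw [Subtype.ext_iff, val_edge hl (by omega) (by omega), ← h, hx, hy, Sym2.eq_swap]
    · refine ⟨x.val + 1, by omega, by omega, ?_⟩
      rw [Subtype.ext_iff, val_edge hl (by omega) (by omega), ← h, hx, hy]

theorem exists_mem_edge_and_mem_edge_iff (hm₁ : 2 ≤ m) (hm₂ : m < 2 ^ (l + 1)) (hk₁ : 2 ≤ k)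
    (hk₂ : k < 2 ^ (l + 1)) :
    (∃ v, v ∈ (edge hl m).val ∧ v ∈ (edge hl k).val) ↔
      m = k / 2 ∨ k = m / 2 ∨ m / 2 = k / 2 := by
  simp only [mem_edge hl hm₁ hm₂, mem_edge hl hk₁ hk₂]
  constructor
  · rintro ⟨v, rfl | rfl, h | h⟩ <;>
    first
    | rw [vertex_inj (by omega) hm₂ (by omega) (by omega)] at h; omega
    | rw [vertex_inj (by omega) (by omega) (by omega) (by omega)] at h; omega
  · rintro (h | h | h)
    · exact ⟨vertex l m, .inl rfl, .inr (by rw [h])⟩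
    · exact ⟨vertex l k, .inr (by rw [h]), .inl rfl⟩
    · exact ⟨vertex l (m / 2), .inr rfl, .inr (by rw [h])⟩

theorem totalGraph_degree_edge (h₁ : 2 ≤ m) (h₂ : m < 2 ^ (l + 1)) :
    (completeBinaryTree l).totalGraph.degree (.inr (edge hl m))
      = (completeBinaryTree l).degree (vertex l m)
        + (completeBinaryTree l).degree (vertex l (m / 2)) := by
  rw [edge_eq hl h₁ h₂]
  exact SimpleGraph.totalGraph_degree_inr _ (adj_vertex_div_two h₁ h₂)

def vertexPair (l m : ℕ) : Sym2 (Fin (2 ^ (l + 1) - 1) ⊕ (completeBinaryTree l).edgeSet) :=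
  s(.inl (vertex l m), .inl (vertex l (m / 2)))

def lowerIncidence (m : ℕ) : Sym2 (Fin (2 ^ (l + 1) - 1) ⊕ (completeBinaryTree l).edgeSet) :=
  s(.inl (vertex l m), .inr (edge hl m))

def upperIncidence (m : ℕ) : Sym2 (Fin (2 ^ (l + 1) - 1) ⊕ (completeBinaryTree l).edgeSet) :=
  s(.inl (vertex l (m / 2)), .inr (edge hl m))

def parentEdgePair (m : ℕ) : Sym2 (Fin (2 ^ (l + 1) - 1) ⊕ (completeBinaryTree l).edgeSet) :=
  s(.inr (edge hl m), .inr (edge hl (m / 2)))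

def siblingEdgePair (j : ℕ) : Sym2 (Fin (2 ^ (l + 1) - 1) ⊕ (completeBinaryTree l).edgeSet) :=
  s(.inr (edge hl (2 * j)), .inr (edge hl (2 * j + 1)))

theorem totalGraph_adj_edge_edge_iff (hm₁ : 2 ≤ m) (hm₂ : m < 2 ^ (l + 1)) (hk₁ : 2 ≤ k)
    (hk₂ : k < 2 ^ (l + 1)) :
    (completeBinaryTree l).totalGraph.Adj (.inr (edge hl m)) (.inr (edge hl k)) ↔
      m ≠ k ∧ (m = k / 2 ∨ k = m / 2 ∨ m / 2 = k / 2) :=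
  and_congr (not_congr (edge_inj hl hm₁ hm₂ hk₁ hk₂))
    (exists_mem_edge_and_mem_edge_iff hl hm₁ hm₂ hk₁ hk₂)

theorem edgeFinset_totalGraph :
    (completeBinaryTree l).totalGraph.edgeFinset =
      (Ico 2 (2 ^ (l + 1))).image (vertexPair l)
        ∪ (Ico 2 (2 ^ (l + 1))).image (lowerIncidence hl)
        ∪ (Ico 2 (2 ^ (l + 1))).image (upperIncidence hl)
        ∪ (Ico 4 (2 ^ (l + 1))).image (parentEdgePair hl)
        ∪ (Ico 1 (2 ^ l)).image (siblingEdgePair hl) := by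
  refine Subset.antisymm (fun x hx => ?_) ?_
  · induction x using Sym2.ind with
    | _ x y =>
    rw [SimpleGraph.mem_edgeFinset, SimpleGraph.mem_edgeSet] at hx
    simp only [mem_union, mem_image, mem_Ico]
    rcases x with a | f <;> rcases y with b | g
    · obtain ⟨m, hm₁, hm₂, he⟩ := exists_edge_eq hl ⟨s(a, b), hx⟩
      rw [Subtype.ext_iff, val_edge hl hm₁ hm₂] at he
      exact .inl <| .inl <| .inl <| .inl ⟨m, ⟨hm₁, hm₂⟩, congrArg (Sym2.map Sum.inl) he⟩
    · obtain ⟨m, hm₁, hm₂, rfl⟩ := exists_edge_eq hl g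
      rcases (mem_edge hl hm₁ hm₂).1 hx with rfl | rfl
      · exact .inl <| .inl <| .inl <| .inr ⟨m, ⟨hm₁, hm₂⟩, rfl⟩
      · exact .inl <| .inl <| .inr ⟨m, ⟨hm₁, hm₂⟩, rfl⟩
    · obtain ⟨m, hm₁, hm₂, rfl⟩ := exists_edge_eq hl f
      rcases (mem_edge hl hm₁ hm₂).1 hx with rfl | rfl
      · exact .inl <| .inl <| .inl <| .inr ⟨m, ⟨hm₁, hm₂⟩, Sym2.eq_swap⟩
      · exact .inl <| .inl <| .inr ⟨m, ⟨hm₁, hm₂⟩, Sym2.eq_swap⟩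
    · obtain ⟨m, hm₁, hm₂, rfl⟩ := exists_edge_eq hl f
      obtain ⟨k, hk₁, hk₂, rfl⟩ := exists_edge_eq hl g
      obtain ⟨hmk, h | h | h⟩ := (totalGraph_adj_edge_edge_iff hl hm₁ hm₂ hk₁ hk₂).1 hx
      · exact .inl <| .inr ⟨k, ⟨by omega, hk₂⟩, by rw [parentEdgePair, ← h, Sym2.eq_swap]⟩
      · exact .inl <| .inr ⟨m, ⟨by omega, hm₂⟩, by rw [parentEdgePair, ← h]⟩
      · rcases Nat.even_or_odd' m with ⟨j, rfl | rfl⟩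
        · obtain rfl : k = 2 * j + 1 := by omega
          exact .inr ⟨j, ⟨by omega, by omega⟩, rfl⟩
        · obtain rfl : k = 2 * j := by omega
          exact .inr ⟨j, ⟨by omega, by omega⟩, Sym2.eq_swap⟩
  · simp only [union_subset_iff, image_subset_iff, mem_Ico, SimpleGraph.mem_edgeFinset]
    refine ⟨⟨⟨⟨fun m hm => adj_vertex_div_two hm.1 hm.2, fun m hm => ?_⟩, fun m hm => ?_⟩,
      fun m hm => ?_⟩, fun j hj => ?_⟩
    · exact (mem_edge hl hm.1 hm.2).2 (.inl rfl)
    · exact (mem_edge hl hm.1 hm.2).2 (.inr rfl)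
    · exact (totalGraph_adj_edge_edge_iff hl (by omega) hm.2 (by omega) (by omega)).2
        ⟨by omega, .inr (.inl rfl)⟩
    · exact (totalGraph_adj_edge_edge_iff hl (by omega) (by omega) (by omega) (by omega)).2
        ⟨by omega, .inr (.inr (by omega))⟩

theorem injOn_vertexPair : Set.InjOn (vertexPair l) (Ico 2 (2 ^ (l + 1))) := by
  intro m hm k hk h
  simp only [coe_Ico, Set.mem_Ico] at hm hk
  simp (disch := omega) only [vertexPair, Sym2.eq_iff, Sum.inl.injEq, vertex_inj] at h
  omega

theorem injOn_lowerIncidence : Set.InjOn (lowerIncidence hl) (Ico 2 (2 ^ (l + 1))) := by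
  intro m hm k hk h
  simp only [coe_Ico, Set.mem_Ico] at hm hk
  simp (disch := omega) only [lowerIncidence, Sym2.eq_iff, Sum.inl.injEq, Sum.inr.injEq,
    reduceCtorEq, vertex_inj, edge_inj, false_and, or_false] at h
  omega

theorem injOn_upperIncidence : Set.InjOn (upperIncidence hl) (Ico 2 (2 ^ (l + 1))) := by
  intro m hm k hk h
  simp only [coe_Ico, Set.mem_Ico] at hm hk
  simp (disch := omega) only [upperIncidence, Sym2.eq_iff, Sum.inl.injEq, Sum.inr.injEq,
    reduceCtorEq, vertex_inj, edge_inj, false_and, or_false] at h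
  omega

theorem injOn_parentEdgePair : Set.InjOn (parentEdgePair hl) (Ico 4 (2 ^ (l + 1))) := by
  intro m hm k hk h
  simp only [coe_Ico, Set.mem_Ico] at hm hk
  simp (disch := omega) only [parentEdgePair, Sym2.eq_iff, Sum.inr.injEq, edge_inj] at h
  omega

theorem injOn_siblingEdgePair : Set.InjOn (siblingEdgePair hl) (Ico 1 (2 ^ l)) := by
  intro j hj i hi h
  simp only [coe_Ico, Set.mem_Ico] at hj hi
  simp (disch := omega) only [siblingEdgePair, Sym2.eq_iff, Sum.inr.injEq, edge_inj] at h
  omega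

theorem disjoint_lowerIncidence_upperIncidence :
    Disjoint ((Ico 2 (2 ^ (l + 1))).image (lowerIncidence hl))
      ((Ico 2 (2 ^ (l + 1))).image (upperIncidence hl)) := by
  simp only [disjoint_left, mem_image, mem_Ico, not_exists, not_and]
  rintro _ ⟨m, hm, rfl⟩ k hk h
  simp (disch := omega) only [lowerIncidence, upperIncidence, Sym2.eq_iff, Sum.inl.injEq,
    Sum.inr.injEq, reduceCtorEq, vertex_inj, edge_inj, false_and, or_false] at h
  omega

theorem disjoint_parentEdgePair_siblingEdgePair :
    Disjoint ((Ico 4 (2 ^ (l + 1))).image (parentEdgePair hl))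
      ((Ico 1 (2 ^ l)).image (siblingEdgePair hl)) := by
  simp only [disjoint_left, mem_image, mem_Ico, not_exists, not_and]
  rintro _ ⟨m, hm, rfl⟩ j hj h
  simp (disch := omega) only [parentEdgePair, siblingEdgePair, Sym2.eq_iff,
    Sum.inr.injEq, edge_inj] at h
  omega

theorem harmonicIndex_totalGraph_eq_sum :
    (completeBinaryTree l).totalGraph.harmonicIndex =
      ∑ m ∈ Ico 2 (2 ^ (l + 1)),
          (completeBinaryTree l).totalGraph.harmonicWeight (vertexPair l m)
        + ∑ m ∈ Ico 2 (2 ^ (l + 1)),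
          (completeBinaryTree l).totalGraph.harmonicWeight (lowerIncidence hl m)
        + ∑ m ∈ Ico 2 (2 ^ (l + 1)),
          (completeBinaryTree l).totalGraph.harmonicWeight (upperIncidence hl m)
        + ∑ m ∈ Ico 4 (2 ^ (l + 1)),
          (completeBinaryTree l).totalGraph.harmonicWeight (parentEdgePair hl m)
        + ∑ j ∈ Ico 1 (2 ^ l),
          (completeBinaryTree l).totalGraph.harmonicWeight (siblingEdgePair hl j) := by
  rw [SimpleGraph.harmonicIndex_eq_sum_harmonicWeight, edgeFinset_totalGraph hl,
    sum_union, sum_union, sum_union, sum_union, sum_image injOn_vertexPair,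
    sum_image (injOn_lowerIncidence hl), sum_image (injOn_upperIncidence hl),
    sum_image (injOn_parentEdgePair hl), sum_image (injOn_siblingEdgePair hl)]
  -- Families of different kinds (vertex–vertex, vertex–edge, edge–edge) are disjoint
  -- because their elements have different shapes.
  all_goals
    try simp only [disjoint_union_left, disjoint_lowerIncidence_upperIncidence hl,
      disjoint_parentEdgePair_siblingEdgePair hl, and_true]
    simp only [disjoint_iff_ne, forall_mem_image]
    simp [vertexPair, lowerIncidence, upperIncidence, parentEdgePair, siblingEdgePair]

theorem sum_harmonicWeight_vertexPair (hl₃ : 3 ≤ l) :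
    ∑ m ∈ Ico 2 (2 ^ (l + 1)),
        (completeBinaryTree l).totalGraph.harmonicWeight (vertexPair l m)
      = 2 / 5 + (2 ^ l - 4) / 6 + 2 ^ l / 4 := by
  have : 8 ≤ 2 ^ l := by simpa using Nat.pow_le_pow_right two_pos hl₃
  rw [sum_Ico_eq_of_three_pieces (b := 4) (c := 2 ^ l) (x := 1 / 5) (y := 1 / 6) (z := 1 / 4)
    (by omega) (by omega) (by omega)]
  · push_cast; ring
  all_goals
    intro m h₁ h₂
    simp (disch := omega) only [vertexPair, SimpleGraph.harmonicWeight_mk,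
      SimpleGraph.totalGraph_degree_inl, degree_vertex (by omega : 1 ≤ l), if_pos, if_neg]
    norm_num

theorem sum_harmonicWeight_lowerIncidence (hl₃ : 3 ≤ l) :
    ∑ m ∈ Ico 2 (2 ^ (l + 1)),
        (completeBinaryTree l).totalGraph.harmonicWeight (lowerIncidence hl m)
      = 4 / 11 + (2 ^ l - 4) / 6 + 2 ^ l / 3 := by
  have : 8 ≤ 2 ^ l := by simpa using Nat.pow_le_pow_right two_pos hl₃
  rw [sum_Ico_eq_of_three_pieces (b := 4) (c := 2 ^ l) (x := 2 / 11) (y := 1 / 6) (z := 1 / 3)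
    (by omega) (by omega) (by omega)]
  · push_cast; ring
  all_goals
    intro m h₁ h₂
    simp (disch := omega) only [lowerIncidence, SimpleGraph.harmonicWeight_mk,
      SimpleGraph.totalGraph_degree_inl, totalGraph_degree_edge, degree_vertex hl, if_pos, if_neg]
    norm_num

theorem sum_harmonicWeight_upperIncidence (hl₃ : 3 ≤ l) :
    ∑ m ∈ Ico 2 (2 ^ (l + 1)),
        (completeBinaryTree l).totalGraph.harmonicWeight (upperIncidence hl m)
      = 4 / 9 + (2 ^ l - 4) / 6 + 2 ^ l / 5 := by
  have : 8 ≤ 2 ^ l := by simpa using Nat.pow_le_pow_right two_pos hl₃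
  rw [sum_Ico_eq_of_three_pieces (b := 4) (c := 2 ^ l) (x := 2 / 9) (y := 1 / 6) (z := 1 / 5)
    (by omega) (by omega) (by omega)]
  · push_cast; ring
  all_goals
    intro m h₁ h₂
    simp (disch := omega) only [upperIncidence, SimpleGraph.harmonicWeight_mk,
      SimpleGraph.totalGraph_degree_inl, totalGraph_degree_edge, degree_vertex hl, if_pos, if_neg]
    norm_num

theorem sum_harmonicWeight_parentEdgePair (hl₃ : 3 ≤ l) :
    ∑ m ∈ Ico 4 (2 ^ (l + 1)),
        (completeBinaryTree l).totalGraph.harmonicWeight (parentEdgePair hl m)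
      = 8 / 11 + (2 ^ l - 8) / 6 + 2 ^ l / 5 := by
  have : 8 ≤ 2 ^ l := by simpa using Nat.pow_le_pow_right two_pos hl₃
  rw [sum_Ico_eq_of_three_pieces (b := 8) (c := 2 ^ l) (x := 2 / 11) (y := 1 / 6) (z := 1 / 5)
    (by omega) (by omega) (by omega)]
  · push_cast; ring
  all_goals
    intro m h₁ h₂
    simp (disch := omega) only [parentEdgePair, SimpleGraph.harmonicWeight_mk,
      totalGraph_degree_edge, degree_vertex hl, if_pos, if_neg]
    norm_num

theorem sum_harmonicWeight_siblingEdgePair (hl₃ : 3 ≤ l) :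
    ∑ j ∈ Ico 1 (2 ^ l),
        (completeBinaryTree l).totalGraph.harmonicWeight (siblingEdgePair hl j)
      = 1 / 5 + (2 ^ l / 2 - 2) / 6 + 2 ^ l / 2 / 4 := by
  obtain ⟨k, rfl⟩ : ∃ k, l = k + 1 := ⟨l - 1, by omega⟩
  have : 4 ≤ 2 ^ k := by simpa using Nat.pow_le_pow_right two_pos (by omega : 2 ≤ k)
  rw [sum_Ico_eq_of_three_pieces (b := 2) (c := 2 ^ k) (x := 1 / 5) (y := 1 / 6) (z := 1 / 4)
    (by omega) (by omega) (by omega)]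
  · push_cast; ring
  all_goals
    intro j h₁ h₂
    simp (disch := omega) only [siblingEdgePair, SimpleGraph.harmonicWeight_mk,
      totalGraph_degree_edge, degree_vertex hl, if_pos, if_neg]
    norm_num

end completeBinaryTree

/-- For the complete binary tree `T_l` of level `l ≥ 3`,
`H(T(T_l)) = (223/120)·2^l - 758/495`. -/
theorem harmonicIndex_totalGraph_completeBinaryTree (l : ℕ) (hl : 3 ≤ l) :
    (completeBinaryTree l).totalGraph.harmonicIndex
      = (223 / 120) * 2 ^ l - 758 / 495 := by
  have hl₁ : 1 ≤ l := by omega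
  rw [completeBinaryTree.harmonicIndex_totalGraph_eq_sum hl₁,
    completeBinaryTree.sum_harmonicWeight_vertexPair hl,
    completeBinaryTree.sum_harmonicWeight_lowerIncidence hl₁ hl,
    completeBinaryTree.sum_harmonicWeight_upperIncidence hl₁ hl,
    completeBinaryTree.sum_harmonicWeight_parentEdgePair hl₁ hl,
    completeBinaryTree.sum_harmonicWeight_siblingEdgePair hl₁ hl]
  ring
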